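/- Let R be a commutative ring with an ℕ-grading R = ⊕_{n≥0} R_n, let M be a ℤ-graded R-module, and let 𝔭 be a homogeneous prime ideal of R that does not contain the irrelevant ideal R₊ = ⊕_{n>0} R_n. For any integer n₀, let M_{≥n₀} be the submodule of M generated by the homogeneous elements of degree ≥ n₀. Then the localization of the quotient module M/M_{≥n₀} at 𝔭 is zero; consequently, the localization M_𝔭 is nonzero if and only if the localization (M_{≥n₀})_𝔭 is nonzero (so M and M_{≥n₀} have the same support in Proj R). -/

import Mathlib

/-!
If `r ∈ R_n` with `n > 0` lies outside `𝔭`, then multiplying a homogeneous element of degree `d`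
by a high enough power of `r` pushes it into degree `≥ n₀`. Hence every element of `M` is killed
in `M / M_{≥n₀}` by some unit of `R_𝔭`, so `(M / M_{≥n₀})_𝔭 = 0`, and the short exact sequence
`0 → M_{≥n₀} → M → M / M_{≥n₀} → 0` gives `Supp M = Supp M_{≥n₀} ∪ Supp (M / M_{≥n₀})`.
-/

section Localization

variable {R M : Type*} [CommRing R] [AddCommGroup M] [Module R M]

theorem LocalizedModule.subsingleton_quotient_iff (T : Submonoid R) (N : Submodule R M) :
    Subsingleton (LocalizedModule T (M ⧸ N)) ↔ ∀ m : M, ∃ t ∈ T, t • m ∈ N := by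
  simp only [LocalizedModule.subsingleton_iff, N.mkQ_surjective.forall, Submodule.mkQ_apply,
    ← Submodule.Quotient.mk_smul, Submodule.Quotient.mk_eq_zero]

theorem Module.mem_support_iff_mem_support_submodule {p : PrimeSpectrum R} (N : Submodule R M)
    (h : p ∉ Module.support R (M ⧸ N)) :
    p ∈ Module.support R M ↔ p ∈ Module.support R N := by
  rw [Module.support_of_exact (LinearMap.exact_subtype_mkQ N) N.injective_subtype
    N.mkQ_surjective]
  simp [h]

end Localization

section Graded

variable {R M : Type*} [CommRing R] [AddCommGroup M] [Module R M]
  {𝒜 : ℕ → AddSubgroup R} [SetLike.GradedMonoid 𝒜] {ℳ : ℤ → AddSubgroup M}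

theorem exists_pow_smul_mem_span_of_degree_ge [DirectSum.Decomposition ℳ]
    (hcompat : ∀ (i : ℕ) (j : ℤ) (r : R) (m : M), r ∈ 𝒜 i → m ∈ ℳ j → r • m ∈ ℳ (i + j))
    {n : ℕ} (hn : 0 < n) {r : R} (hr : r ∈ 𝒜 n) (n₀ : ℤ) (m : M) :
    ∃ k : ℕ, r ^ k • m ∈ Submodule.span R {m : M | ∃ d ≥ n₀, m ∈ ℳ d} := by
  induction m using DirectSum.Decomposition.inductionOn ℳ with
  | zero => exact ⟨0, by simp⟩
  | @homogeneous d m =>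
    refine ⟨(n₀ - d).toNat, Submodule.subset_span ⟨_, ?_, hcompat _ _ _ _
      (SetLike.pow_mem_graded _ hr) m.2⟩⟩
    have : n₀ - d ≤ (n₀ - d).toNat * n :=
      (Int.self_le_toNat _).trans (le_mul_of_one_le_right (by positivity) (by exact_mod_cast hn))
    push_cast [smul_eq_mul]
    linarith
  | add x y hx hy =>
    obtain ⟨k, hk⟩ := hx
    obtain ⟨l, hl⟩ := hy
    refine ⟨k + l, ?_⟩
    rw [smul_add, pow_add]
    exact add_mem (by rw [mul_comm, mul_smul]; exact Submodule.smul_mem _ _ hk)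
      (by rw [mul_smul]; exact Submodule.smul_mem _ _ hl)

end Graded

theorem localization_cutoff_of_homogeneous_prime_general
    (R : Type) [CommRing R] (𝒜 : ℕ → AddSubgroup R) [GradedRing 𝒜]
    (M : Type) [AddCommGroup M] [Module R M]
    (ℳ : ℤ → AddSubgroup M) [DirectSum.Decomposition ℳ]
    (hcompat : ∀ (i : ℕ) (j : ℤ) (r : R) (m : M), r ∈ 𝒜 i → m ∈ ℳ j → r • m ∈ ℳ (i + j))
    (𝔭 : Ideal R) [h𝔭 : 𝔭.IsPrime]
    (hirr : ∃ n : ℕ, 0 < n ∧ ∃ r ∈ 𝒜 n, r ∉ 𝔭)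
    (n₀ : ℤ)
    (S : Submodule R M) (hS : S = Submodule.span R {m : M | ∃ d ≥ n₀, m ∈ ℳ d}) :
    Subsingleton (LocalizedModule 𝔭.primeCompl (M ⧸ S)) ∧
      (Nontrivial (LocalizedModule 𝔭.primeCompl M) ↔
        Nontrivial (LocalizedModule 𝔭.primeCompl S)) := by
  obtain ⟨n, hn, r, hr, hr𝔭⟩ := hirr
  have hquot : Subsingleton (LocalizedModule 𝔭.primeCompl (M ⧸ S)) := by
    refine (LocalizedModule.subsingleton_quotient_iff _ S).2 fun m => ?_
    obtain ⟨k, hk⟩ := exists_pow_smul_mem_span_of_degree_ge hcompat hn hr n₀ m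
    exact ⟨r ^ k, pow_mem (show r ∈ 𝔭.primeCompl from hr𝔭) k, hS ▸ hk⟩
  exact ⟨hquot, Module.mem_support_iff_mem_support_submodule (p := ⟨𝔭, h𝔭⟩) S
    (Module.notMem_support_iff.2 hquot)⟩

/-- Let `R = ⊕_{n ≥ 0} R_n` be an ℕ-graded commutative ring, `M = ⊕_{d ∈ ℤ} M_d` a ℤ-graded
`R`-module, and `𝔭` a homogeneous prime ideal of `R` not containing the irrelevant ideal
`R₊ = ⊕_{n > 0} R_n`.  For `n₀ ∈ ℤ` let `M_{≥n₀}` be the submodule generated by the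
homogeneous elements of degree `≥ n₀`.  Then `(M / M_{≥n₀})_𝔭 = 0`, and consequently
`M_𝔭 ≠ 0` if and only if `(M_{≥n₀})_𝔭 ≠ 0`. -/
theorem localization_cutoff_of_homogeneous_prime
    (R : Type) [CommRing R] (𝒜 : ℕ → AddSubgroup R) [GradedRing 𝒜]
    (M : Type) [AddCommGroup M] [Module R M]
    (ℳ : ℤ → AddSubgroup M) [DirectSum.Decomposition ℳ]
    (hcompat : ∀ (i : ℕ) (j : ℤ) (r : R) (m : M), r ∈ 𝒜 i → m ∈ ℳ j → r • m ∈ ℳ (i + j))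
    (𝔭 : Ideal R) [h𝔭 : 𝔭.IsPrime] (hhom : Ideal.IsHomogeneous 𝒜 𝔭)
    (hirr : ∃ n : ℕ, 0 < n ∧ ∃ r ∈ 𝒜 n, r ∉ 𝔭)
    (n₀ : ℤ)
    (S : Submodule R M) (hS : S = Submodule.span R {m : M | ∃ d ≥ n₀, m ∈ ℳ d}) :
    Subsingleton (LocalizedModule 𝔭.primeCompl (M ⧸ S)) ∧
      (Nontrivial (LocalizedModule 𝔭.primeCompl M) ↔
        Nontrivial (LocalizedModule 𝔭.primeCompl S)) :=
  localization_cutoff_of_homogeneous_prime_general R 𝒜 M ℳ hcompat 𝔭 (h𝔭 := h𝔭) hirr n₀ S hS
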